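/- arXiv:1905.13296 — 2 statements merged into one kernel-verified Lean document; each statement's English description precedes it below -/
import Mathlib

section
/- If the pair (A, B) is controllable and the range of B is contained in the range of D, then for every matrix K the pair (A + BK, D) is controllable. -/
/-!
The column space of `[D, MD, …, M^{n-1}D]` is the Krylov subspace of `M` generated by `range D`.
Perturbing `M` by a map `G` with `range G ⊆ range D` does not change this subspace, since
`(M + G) W ⊆ M W + range D` keeps each Krylov step inside the next one. With `G = BK` this gives
`𝒦(A + BK, range D) = 𝒦(A, range D) ⊇ 𝒦(A, range B) = ℝⁿ`.
-/

section Krylov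

variable {R E : Type*} [Semiring R] [AddCommMonoid E] [Module R E]

def krylov (f : Module.End R E) (V : Submodule R E) (k : ℕ) : Submodule R E :=
  ⨆ j : Fin k, V.map (f ^ (j : ℕ))

variable {f g : Module.End R E} {V : Submodule R E}

lemma map_pow_le_krylov {j k : ℕ} (hj : j < k) : V.map (f ^ j) ≤ krylov f V k :=
  le_iSup_of_le (⟨j, hj⟩ : Fin k) le_rfl

lemma le_krylov {k : ℕ} (hk : 0 < k) : V ≤ krylov f V k := by
  simpa [Module.End.one_eq_id] using map_pow_le_krylov (f := f) (V := V) hk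

lemma krylov_mono_index {k l : ℕ} (hkl : k ≤ l) : krylov f V k ≤ krylov f V l :=
  iSup_le fun j => map_pow_le_krylov (j.2.trans_le hkl)

lemma krylov_mono_submodule {W : Submodule R E} (hVW : V ≤ W) (k : ℕ) :
    krylov f V k ≤ krylov f W k :=
  iSup_mono fun _ => Submodule.map_mono hVW

lemma map_krylov_le_krylov_succ (k : ℕ) : (krylov f V k).map f ≤ krylov f V (k + 1) := by
  rw [krylov, Submodule.map_iSup]
  refine iSup_le fun j => ?_
  rw [← Submodule.map_comp, ← Module.End.mul_eq_comp, ← pow_succ']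
  exact map_pow_le_krylov (Nat.succ_lt_succ j.2)

lemma map_pow_add_le_krylov (hg : LinearMap.range g ≤ V) (j : ℕ) :
    V.map ((f + g) ^ j) ≤ krylov f V (j + 1) := by
  induction j with
  | zero => simpa [Module.End.one_eq_id] using le_krylov (f := f) (V := V) Nat.one_pos
  | succ j ih =>
    calc V.map ((f + g) ^ (j + 1))
        = (V.map ((f + g) ^ j)).map (f + g) := by
          rw [← Submodule.map_comp, ← Module.End.mul_eq_comp, ← pow_succ']
      _ ≤ (krylov f V (j + 1)).map f ⊔ LinearMap.range g :=
          (Submodule.map_add_le _ f g).trans (sup_le_sup (Submodule.map_mono ih) LinearMap.map_le_range)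
      _ ≤ krylov f V (j + 2) :=
          sup_le (map_krylov_le_krylov_succ _) (hg.trans (le_krylov (Nat.succ_pos _)))

lemma krylov_add_le (hg : LinearMap.range g ≤ V) (k : ℕ) : krylov (f + g) V k ≤ krylov f V k :=
  iSup_le fun j => (map_pow_add_le_krylov hg j).trans (krylov_mono_index j.2)

end Krylov

lemma krylov_add_eq {R E : Type*} [Ring R] [AddCommGroup E] [Module R E] {f g : Module.End R E}
    {V : Submodule R E} (hg : LinearMap.range g ≤ V) (k : ℕ) : krylov (f + g) V k = krylov f V k := by
  refine (krylov_add_le hg k).antisymm ?_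
  simpa using krylov_add_le (f := f + g) (g := -g) (by rwa [LinearMap.range_neg]) k

/-- The block matrix `[X, MX, …, M^{k-1}X]`, with column `(j, c)` the `c`-th column of `M^j X`. -/
def ctrbMatrix {R ι κ : Type*} [Semiring R] [Fintype ι] [DecidableEq ι]
    (M : Matrix ι ι R) (X : Matrix ι κ R) (k : ℕ) : Matrix ι (Fin k × κ) R :=
  Matrix.of fun i p => (M ^ (p.1 : ℕ) * X) i p.2

lemma range_mulVecLin_ctrbMatrix {R ι κ : Type*} [CommSemiring R] [Fintype ι] [DecidableEq ι]
    [Fintype κ] (M : Matrix ι ι R) (X : Matrix ι κ R) (k : ℕ) :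
    LinearMap.range (ctrbMatrix M X k).mulVecLin =
      krylov M.mulVecLin (LinearMap.range X.mulVecLin) k := by
  have hcols : Set.range (ctrbMatrix M X k).col = ⋃ j : Fin k, Set.range (M ^ (j : ℕ) * X).col := by
    ext v; simp only [Set.mem_iUnion, Set.mem_range, Prod.exists]; rfl
  rw [Matrix.range_mulVecLin, hcols, Submodule.span_iUnion, krylov]
  refine iSup_congr fun j => ?_
  rw [← Matrix.range_mulVecLin, Matrix.mulVecLin_mul, LinearMap.range_comp, ← Matrix.toLin'_apply',
    Matrix.toLin'_pow, Matrix.toLin'_apply']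

lemma Matrix.rank_eq_iff_range_eq_top {K κ : Type*} [Field K] [Fintype κ] {n : ℕ}
    (A : Matrix (Fin n) κ K) : A.rank = n ↔ LinearMap.range A.mulVecLin = ⊤ := by
  refine ⟨fun h => Submodule.eq_top_of_finrank_eq ?_, fun h => ?_⟩
  · rw [← Matrix.rank, h, Module.finrank_fin_fun]
  · rw [Matrix.rank, h, finrank_top, Module.finrank_fin_fun]

theorem closed_loop_controllable {n m d : ℕ}
    (A : Matrix (Fin n) (Fin n) ℝ) (B : Matrix (Fin n) (Fin m) ℝ)
    (D : Matrix (Fin n) (Fin d) ℝ)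
    (hctrb : (Matrix.of fun (i : Fin n) (p : Fin n × Fin m) =>
        (A ^ (p.1 : ℕ) * B) i p.2).rank = n)
    (hrange : LinearMap.range B.mulVecLin ≤ LinearMap.range D.mulVecLin) :
    ∀ K : Matrix (Fin m) (Fin n) ℝ,
      (Matrix.of fun (i : Fin n) (p : Fin n × Fin d) =>
        ((A + B * K) ^ (p.1 : ℕ) * D) i p.2).rank = n := by
  intro K
  change (ctrbMatrix A B n).rank = n at hctrb
  change (ctrbMatrix (A + B * K) D n).rank = n
  rw [Matrix.rank_eq_iff_range_eq_top, range_mulVecLin_ctrbMatrix] at hctrb ⊢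
  have hBK : LinearMap.range (B * K).mulVecLin ≤ LinearMap.range D.mulVecLin := by
    rw [Matrix.mulVecLin_mul]
    exact (LinearMap.range_comp_le_range _ _).trans hrange
  rw [Matrix.mulVecLin_add, krylov_add_eq hBK, eq_top_iff, ← hctrb]
  exact krylov_mono_submodule hrange n
end

section
/- With the same setup (u_k = v_k + K_k y_k, y_{k+1} = A y_k + D w_k, y₀ = x₀ − μ₀), the covariance of x_k is Cov(x_k) = Ψ_k Σ₀ Ψ_kᵀ + ∑_{j=0}^{k−1} Θ_{k,j} Θ_{k,j}ᵀ, where the matrices Ψ_k, Θ_{k,j} are determined by A, B, D and the gains K₀,…,K_{k−1}, independently of the v_j and μ₀. In particular, Cov(x_k) does not depend on the feedforward sequence v₀,…,v_{k−1}. -/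
/-!
Both `y` and `x` obey recursions `s (k + 1) = A s k + e k`, so by variation of constants
`x_k = c_k + Ψ_k (x₀ - μ₀) + ∑_{l<k} Θ_{k,l} w_l`, where the deterministic part `c_k` absorbs `μ₀`
and the feedforward terms `v_j`, while `Ψ_k` and `Θ_{k,l}` (free response plus feedback through
`K_j y_j`) involve only `A`, `B`, `D` and `K`. Hence `x_k - E x_k` is a linear image of the
zero-mean vectors `x₀ - μ₀, w_0, …, w_{k-1}`, and the covariance follows from bilinearity of
`E[X Yᵀ]`: the cross terms vanish because these vectors are uncorrelated, and `E[w_l w_lᵀ] = I`.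
-/

open Matrix MeasureTheory Finset

section SecondMoments

variable {Ω : Type*} [MeasurableSpace Ω] {P : Measure Ω} {ι p q r : Type*}

noncomputable def crossMoment (P : Measure Ω) (X : Ω → p → ℝ) (Y : Ω → q → ℝ) : Matrix p q ℝ :=
  Matrix.of fun i j => ∫ ω, X ω i * Y ω j ∂P

lemma transpose_crossMoment (X : Ω → p → ℝ) (Y : Ω → q → ℝ) :
    (crossMoment P X Y)ᵀ = crossMoment P Y X := by
  ext i j
  simp only [crossMoment, transpose_apply, of_apply, mul_comm]

variable [Fintype p] [Fintype q]

lemma MeasureTheory.MemLp.mulVec [Fintype r] {X : Ω → p → ℝ} (M : Matrix r p ℝ)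
    (hX : MemLp X 2 P) :
    MemLp (fun ω => M *ᵥ X ω) 2 P :=
  (LinearMap.toContinuousLinearMap (mulVecLin M)).comp_memLp' hX

lemma memLp_two_of_integrable_mul_self {X : Ω → p → ℝ}
    (hX : ∀ i, Integrable (fun ω => X ω i) P) (hXX : ∀ i, Integrable (fun ω => X ω i * X ω i) P) :
    MemLp X 2 P :=
  memLp_pi_iff.2 fun i =>
    (memLp_two_iff_integrable_sq (hX i).aestronglyMeasurable).2 (by simpa only [sq] using hXX i)

lemma MeasureTheory.Integrable.mulVec [Fintype r] {X : Ω → p → ℝ} (M : Matrix r p ℝ)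
    (hX : Integrable X P) : Integrable (fun ω => M *ᵥ X ω) P :=
  (LinearMap.toContinuousLinearMap (mulVecLin M)).integrable_comp hX

lemma integral_mulVec [Fintype r] {X : Ω → p → ℝ} (M : Matrix r p ℝ) (hX : Integrable X P) :
    ∫ ω, M *ᵥ X ω ∂P = M *ᵥ ∫ ω, X ω ∂P :=
  (LinearMap.toContinuousLinearMap (mulVecLin M)).integral_comp_comm hX

lemma integral_const_add_mulVec_add_sum_mulVec [IsProbabilityMeasure P] [Fintype r] (s : Finset ι)
    (c : r → ℝ) (Ψ : Matrix r p ℝ) (Θ : ι → Matrix r q ℝ) {z : Ω → p → ℝ} {w : ι → Ω → q → ℝ}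
    (hz : Integrable z P) (hw : ∀ l, Integrable (w l) P) (hz0 : ∫ ω, z ω ∂P = 0)
    (hw0 : ∀ l, ∫ ω, w l ω ∂P = 0) :
    ∫ ω, c + (Ψ *ᵥ z ω + ∑ l ∈ s, Θ l *ᵥ w l ω) ∂P = c := by
  have hW : Integrable (fun ω => ∑ l ∈ s, Θ l *ᵥ w l ω) P :=
    integrable_finsetSum s fun l _ => (hw l).mulVec (Θ l)
  have hX : Integrable (fun ω => Ψ *ᵥ z ω + ∑ l ∈ s, Θ l *ᵥ w l ω) P := (hz.mulVec Ψ).add hW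
  rw [integral_add (integrable_const c) hX, integral_add (hz.mulVec Ψ) hW,
    integral_finsetSum s fun l _ => (hw l).mulVec (Θ l), integral_mulVec Ψ hz]
  simp only [integral_mulVec _ (hw _), hz0, hw0, mulVec_zero, sum_const_zero, add_zero,
    integral_const, probReal_univ, one_smul]

lemma MeasureTheory.MemLp.integrable_mul_apply {X : Ω → p → ℝ} {Y : Ω → q → ℝ} (hX : MemLp X 2 P)
    (hY : MemLp Y 2 P) (i : p) (j : q) : Integrable (fun ω => X ω i * Y ω j) P :=
  (hX.eval i).integrable_mul (hY.eval j)

lemma crossMoment_add_left {X X' : Ω → p → ℝ} {Y : Ω → q → ℝ} (hX : MemLp X 2 P)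
    (hX' : MemLp X' 2 P) (hY : MemLp Y 2 P) :
    crossMoment P (fun ω => X ω + X' ω) Y = crossMoment P X Y + crossMoment P X' Y := by
  ext i j
  simp only [crossMoment, of_apply, Matrix.add_apply, Pi.add_apply, add_mul]
  exact integral_add (hX.integrable_mul_apply hY i j) (hX'.integrable_mul_apply hY i j)

lemma crossMoment_add_right {X : Ω → p → ℝ} {Y Y' : Ω → q → ℝ} (hX : MemLp X 2 P)
    (hY : MemLp Y 2 P) (hY' : MemLp Y' 2 P) :
    crossMoment P X (fun ω => Y ω + Y' ω) = crossMoment P X Y + crossMoment P X Y' := by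
  rw [← transpose_crossMoment, crossMoment_add_left hY hY' hX, transpose_add,
    transpose_crossMoment, transpose_crossMoment]

lemma crossMoment_sum_left {X : ι → Ω → p → ℝ} {Y : Ω → q → ℝ} (s : Finset ι)
    (hX : ∀ l, MemLp (X l) 2 P) (hY : MemLp Y 2 P) :
    crossMoment P (fun ω => ∑ l ∈ s, X l ω) Y = ∑ l ∈ s, crossMoment P (X l) Y := by
  ext i j
  simp only [crossMoment, of_apply, Matrix.sum_apply, Finset.sum_apply, Finset.sum_mul]
  exact integral_finsetSum s fun l _ => (hX l).integrable_mul_apply hY i j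

lemma crossMoment_sum_right {X : Ω → p → ℝ} {Y : ι → Ω → q → ℝ} (s : Finset ι)
    (hX : MemLp X 2 P) (hY : ∀ l, MemLp (Y l) 2 P) :
    crossMoment P X (fun ω => ∑ l ∈ s, Y l ω) = ∑ l ∈ s, crossMoment P X (Y l) := by
  rw [← transpose_crossMoment, crossMoment_sum_left s hY hX, transpose_sum]
  simp only [transpose_crossMoment]

lemma crossMoment_mulVec_left {X : Ω → p → ℝ} {Y : Ω → q → ℝ} (M : Matrix r p ℝ)
    (hX : MemLp X 2 P) (hY : MemLp Y 2 P) :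
    crossMoment P (fun ω => M *ᵥ X ω) Y = M * crossMoment P X Y := by
  ext i j
  simp only [crossMoment, of_apply, mul_apply, mulVec, dotProduct, Finset.sum_mul, mul_assoc]
  rw [integral_finsetSum _ fun k _ => (hX.integrable_mul_apply hY k j).const_mul (M i k)]
  simp only [integral_const_mul]

lemma crossMoment_mulVec_right {X : Ω → p → ℝ} {Y : Ω → q → ℝ} (N : Matrix r q ℝ)
    (hX : MemLp X 2 P) (hY : MemLp Y 2 P) :
    crossMoment P X (fun ω => N *ᵥ Y ω) = crossMoment P X Y * Nᵀ := by
  rw [← transpose_crossMoment, crossMoment_mulVec_left N hY hX, transpose_mul,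
    transpose_crossMoment]

lemma crossMoment_mulVec_add_sum_mulVec [Fintype r] [DecidableEq q] [DecidableEq ι] (s : Finset ι)
    (Ψ : Matrix r p ℝ) (Θ : ι → Matrix r q ℝ) {z : Ω → p → ℝ} {w : ι → Ω → q → ℝ}
    (hz : MemLp z 2 P) (hw : ∀ l, MemLp (w l) 2 P) (hzw : ∀ l, crossMoment P z (w l) = 0)
    (hww : ∀ l, crossMoment P (w l) (w l) = 1)
    (hww' : ∀ l l', l ≠ l' → crossMoment P (w l) (w l') = 0) :
    crossMoment P (fun ω => Ψ *ᵥ z ω + ∑ l ∈ s, Θ l *ᵥ w l ω)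
        (fun ω => Ψ *ᵥ z ω + ∑ l ∈ s, Θ l *ᵥ w l ω)
      = Ψ * crossMoment P z z * Ψᵀ + ∑ l ∈ s, Θ l * (Θ l)ᵀ := by
  have hΨz := hz.mulVec Ψ
  have hΘw : ∀ l, MemLp (fun ω => Θ l *ᵥ w l ω) 2 P := fun l => (hw l).mulVec (Θ l)
  have hW : MemLp (fun ω => ∑ l ∈ s, Θ l *ᵥ w l ω) 2 P := memLp_finsetSum s fun l _ => hΘw l
  have hzW : crossMoment P (fun ω => Ψ *ᵥ z ω) (fun ω => ∑ l ∈ s, Θ l *ᵥ w l ω) = 0 := by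
    rw [crossMoment_sum_right s hΨz hΘw]
    refine Finset.sum_eq_zero fun l _ => ?_
    rw [crossMoment_mulVec_left Ψ hz (hΘw l), crossMoment_mulVec_right _ hz (hw l), hzw,
      Matrix.zero_mul, Matrix.mul_zero]
  have hWW : crossMoment P (fun ω => ∑ l ∈ s, Θ l *ᵥ w l ω) (fun ω => ∑ l ∈ s, Θ l *ᵥ w l ω)
      = ∑ l ∈ s, Θ l * (Θ l)ᵀ := by
    rw [crossMoment_sum_left s hΘw hW]
    refine Finset.sum_congr rfl fun l hl => ?_
    rw [crossMoment_sum_right s (hΘw l) hΘw, Finset.sum_eq_single_of_mem l hl fun l' _ hl' => ?_]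
    · rw [crossMoment_mulVec_left _ (hw l) (hΘw l), crossMoment_mulVec_right _ (hw l) (hw l),
        hww, Matrix.one_mul]
    · rw [crossMoment_mulVec_left _ (hw l) (hΘw l'), crossMoment_mulVec_right _ (hw l) (hw l'),
        hww' l l' hl'.symm, Matrix.zero_mul, Matrix.mul_zero]
  have hWz : crossMoment P (fun ω => ∑ l ∈ s, Θ l *ᵥ w l ω) (fun ω => Ψ *ᵥ z ω) = 0 := by
    rw [← transpose_crossMoment, hzW, transpose_zero]
  have hZW : MemLp (fun ω => Ψ *ᵥ z ω + ∑ l ∈ s, Θ l *ᵥ w l ω) 2 P := hΨz.add hW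
  rw [crossMoment_add_left hΨz hW hZW, crossMoment_add_right hΨz hΨz hW,
    crossMoment_add_right hW hΨz hW, hzW, hWz, hWW, crossMoment_mulVec_left Ψ hz hΨz,
    crossMoment_mulVec_right Ψ hz hz]
  simp only [add_zero, zero_add, Matrix.mul_assoc]

end SecondMoments

lemma eq_pow_mulVec_add_sum_of_succ {R p : Type*} [Semiring R] [Fintype p] [DecidableEq p]
    {A : Matrix p p R} {s e : ℕ → p → R} (h : ∀ k, s (k + 1) = A *ᵥ s k + e k) (k : ℕ) :
    s k = A ^ k *ᵥ s 0 + ∑ j ∈ range k, A ^ (k - 1 - j) *ᵥ e j := by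
  induction k with
  | zero => simp
  | succ k ih =>
    have hpow : ∀ j ∈ range k, A *ᵥ (A ^ (k - 1 - j) *ᵥ e j) = A ^ (k + 1 - 1 - j) *ᵥ e j := by
      intro j hj
      rw [mulVec_mulVec, ← pow_succ', show k - 1 - j + 1 = k + 1 - 1 - j by
        have := mem_range.mp hj; omega]
    rw [h, ih, mulVec_add, mulVec_mulVec, ← pow_succ', mulVec_sum, sum_congr rfl hpow,
      sum_range_succ, Nat.add_sub_cancel, Nat.sub_self, pow_zero, one_mulVec, add_assoc]

lemma sum_range_sum_range_eq_sum_range_sum_Ioo {M : Type*} [AddCommMonoid M] (k : ℕ)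
    (f : ℕ → ℕ → M) :
    ∑ j ∈ range k, ∑ l ∈ range j, f j l = ∑ l ∈ range k, ∑ j ∈ Ioo l k, f j l :=
  sum_comm' fun j l => by simp only [mem_range, mem_Ioo]; omega

section ClosedLoop

variable {n m d : ℕ} (A : Matrix (Fin n) (Fin n) ℝ) (B : Matrix (Fin n) (Fin m) ℝ)
  (D : Matrix (Fin n) (Fin d) ℝ) (K : ℕ → Matrix (Fin m) (Fin n) ℝ)

def initialResponse (k : ℕ) : Matrix (Fin n) (Fin n) ℝ :=
  A ^ k + ∑ j ∈ range k, A ^ (k - 1 - j) * B * K j * A ^ j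

-- Meaningful for `l < k` only, where the natural-number subtractions are exact.
def noiseResponse (k l : ℕ) : Matrix (Fin n) (Fin d) ℝ :=
  A ^ (k - 1 - l) * D + ∑ j ∈ Ioo l k, A ^ (k - 1 - j) * B * K j * A ^ (j - 1 - l) * D

def meanTrajectory (v : ℕ → Fin m → ℝ) (μ₀ : Fin n → ℝ) (k : ℕ) : Fin n → ℝ :=
  A ^ k *ᵥ μ₀ + ∑ j ∈ range k, A ^ (k - 1 - j) *ᵥ B *ᵥ v j

lemma closedLoop_state_eq {Ω : Type*} (v : ℕ → Fin m → ℝ) (μ₀ : Fin n → ℝ)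
    {x₀ : Ω → Fin n → ℝ} {w : ℕ → Ω → Fin d → ℝ} {x y : ℕ → Ω → Fin n → ℝ}
    (hx0 : x 0 = x₀) (hx : ∀ k ω, x (k + 1) ω = A *ᵥ x k ω + B *ᵥ (v k + K k *ᵥ y k ω) + D *ᵥ w k ω)
    (hy0 : ∀ ω, y 0 ω = x₀ ω - μ₀) (hy : ∀ k ω, y (k + 1) ω = A *ᵥ y k ω + D *ᵥ w k ω)
    (k : ℕ) (ω : Ω) :
    x k ω = meanTrajectory A B v μ₀ k + (initialResponse A B K k *ᵥ (x₀ ω - μ₀)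
      + ∑ l ∈ range k, noiseResponse A B D K k l *ᵥ w l ω) := by
  have hyk : ∀ j, y j ω = A ^ j *ᵥ (x₀ ω - μ₀) + ∑ l ∈ range j, A ^ (j - 1 - l) *ᵥ D *ᵥ w l ω :=
    fun j => by rw [eq_pow_mulVec_add_sum_of_succ (s := fun j => y j ω) (fun k => hy k ω) j, hy0]
  rw [eq_pow_mulVec_add_sum_of_succ (s := fun k => x k ω) (fun k => by rw [hx, add_assoc]) k,
    hx0]
  obtain ⟨z, rfl⟩ : ∃ z, x₀ = fun ω => μ₀ + z ω := ⟨fun ω => x₀ ω - μ₀, by simp⟩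
  simp only [hyk, meanTrajectory, initialResponse, noiseResponse, add_sub_cancel_left,
    mulVec_add, add_mulVec, mulVec_sum, sum_mulVec, mulVec_mulVec, sum_add_distrib,
    Matrix.mul_assoc, sum_range_sum_range_eq_sum_range_sum_Ioo k]
  abel

end ClosedLoop

/-- Under the filtered-noise affine feedback `u_k = v_k + K_k y_k`, the covariance of the
closed-loop state has the form `Ψ_k Σ₀ Ψ_kᵀ + ∑_{j<k} Θ_{k,j} Θ_{k,j}ᵀ`, where `Ψ` and `Θ`
depend only on `A`, `B`, `D` and the gains `K`; in particular it does not depend on the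
feedforward terms `v` nor on `μ₀`. -/
theorem closed_loop_covariance_structure {n m d : ℕ}
    (A : Matrix (Fin n) (Fin n) ℝ) (B : Matrix (Fin n) (Fin m) ℝ)
    (D : Matrix (Fin n) (Fin d) ℝ) (K : ℕ → Matrix (Fin m) (Fin n) ℝ) :
    ∃ (Ψ : ℕ → Matrix (Fin n) (Fin n) ℝ) (Θ : ℕ → ℕ → Matrix (Fin n) (Fin d) ℝ),
      ∀ (Ω : Type) (_ : MeasurableSpace Ω) (P : Measure Ω), IsProbabilityMeasure P →
      ∀ (v : ℕ → Fin m → ℝ) (μ₀ : Fin n → ℝ) (Sig0 : Matrix (Fin n) (Fin n) ℝ)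
        (x₀ : Ω → Fin n → ℝ) (w : ℕ → Ω → Fin d → ℝ)
        (x y : ℕ → Ω → Fin n → ℝ),
        -- dynamics
        (x 0 = x₀) →
        (∀ k ω, x (k + 1) ω = A *ᵥ x k ω + B *ᵥ (v k + K k *ᵥ y k ω) + D *ᵥ w k ω) →
        (∀ ω, y 0 ω = x₀ ω - μ₀) →
        (∀ k ω, y (k + 1) ω = A *ᵥ y k ω + D *ᵥ w k ω) →
        -- first moments
        (∀ i, Integrable (fun ω => x₀ ω i) P) →
        (∀ i, ∫ ω, x₀ ω i ∂P = μ₀ i) →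
        (∀ k i, Integrable (fun ω => w k ω i) P) →
        (∀ k i, ∫ ω, w k ω i ∂P = 0) →
        -- second moments: initial covariance, identity noise covariance,
        -- mutual independence of noises, independence of noise from x₀
        (∀ i j, Integrable (fun ω => (x₀ ω i - μ₀ i) * (x₀ ω j - μ₀ j)) P) →
        (∀ i j, ∫ ω, (x₀ ω i - μ₀ i) * (x₀ ω j - μ₀ j) ∂P = Sig0 i j) →
        (∀ k l i j, Integrable (fun ω => w k ω i * w l ω j) P) →
        (∀ k i j, ∫ ω, w k ω i * w k ω j ∂P = (1 : Matrix (Fin d) (Fin d) ℝ) i j) →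
        (∀ k l i j, k ≠ l → ∫ ω, w k ω i * w l ω j ∂P = 0) →
        (∀ k i j, Integrable (fun ω => (x₀ ω i - μ₀ i) * w k ω j) P) →
        (∀ k i j, ∫ ω, (x₀ ω i - μ₀ i) * w k ω j ∂P = 0) →
        -- integrability of the state and its second moments
        (∀ k i, Integrable (fun ω => x k ω i) P) →
        (∀ k i j, Integrable (fun ω =>
            (x k ω i - ∫ ω', x k ω' i ∂P) * (x k ω j - ∫ ω', x k ω' j ∂P)) P) →
        -- conclusion: the covariance of x_k is Ψ_k Σ₀ Ψ_kᵀ + ∑_{j<k} Θ_{k,j} Θ_{k,j}ᵀ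
        ∀ k i j,
          ∫ ω, (x k ω i - ∫ ω', x k ω' i ∂P) * (x k ω j - ∫ ω', x k ω' j ∂P) ∂P
            = (Ψ k * Sig0 * (Ψ k)ᵀ
                + ∑ l ∈ Finset.range k, Θ k l * (Θ k l)ᵀ) i j := by
  refine ⟨initialResponse A B K, noiseResponse A B D K, ?_⟩
  intro Ω _ P _ v μ₀ Sig0 x₀ w x y hx0 hx hy0 hy hx₀int hx₀mean hwint hwmean hzzint hzz hwwint
    hww hww' _ hzw hxint _ k i j
  set z : Ω → Fin n → ℝ := fun ω => x₀ ω - μ₀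
  have hzint (i : Fin n) : Integrable (fun ω => z ω i) P := (hx₀int i).sub (integrable_const _)
  have hzL2 : MemLp z 2 P := memLp_two_of_integrable_mul_self hzint fun i => hzzint i i
  have hwL2 (l : ℕ) : MemLp (w l) 2 P :=
    memLp_two_of_integrable_mul_self (hwint l) fun i => hwwint l l i i
  have hz0 : ∫ ω, z ω ∂P = 0 := by
    ext i
    simp [eval_integral hzint, z, integral_sub (hx₀int i) (integrable_const _), hx₀mean]
  have hw0 (l : ℕ) : ∫ ω, w l ω ∂P = 0 := by
    ext i
    rw [eval_integral (hwint l), hwmean, Pi.zero_apply]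
  have hxk := closedLoop_state_eq A B D K v μ₀ hx0 hx hy0 hy k
  have hmean : ∫ ω, x k ω ∂P = meanTrajectory A B v μ₀ k := by
    simp only [hxk]
    exact integral_const_add_mulVec_add_sum_mulVec _ _ _ _ (hzL2.integrable one_le_two)
      (fun l => (hwL2 l).integrable one_le_two) hz0 hw0
  have hcent (ω : Ω) (i : Fin n) : x k ω i - ∫ ω', x k ω' i ∂P =
      (initialResponse A B K k *ᵥ z ω + ∑ l ∈ range k, noiseResponse A B D K k l *ᵥ w l ω) i := by
    rw [← eval_integral (hxint k), hmean, hxk, Pi.add_apply, add_sub_cancel_left]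
  have hcov := crossMoment_mulVec_add_sum_mulVec (range k) (initialResponse A B K k)
    (noiseResponse A B D K k) hzL2 hwL2 (fun l => by ext i j; exact hzw l i j)
    (fun l => by ext i j; exact hww l i j) (fun l l' h => by ext i j; exact hww' l l' i j h)
  have hSig0 : crossMoment P z z = Sig0 := by ext i j; exact hzz i j
  rw [hSig0] at hcov
  simp only [hcent]
  exact congrFun₂ hcov i j
end
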